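/- arXiv:1110.5816 — 3 statements merged into one kernel-verified Lean document; each statement's English description precedes it below -/
import Mathlib

section
/- Let φ₋(t) = (5 - √(25 - 4t))/2. For every t ∈ [0, 6], the sequence k ↦ 5^k · φ₋^{(k)}(t) (where φ₋^{(k)} denotes the k-fold iterate of φ₋) converges as k → ∞. -/
noncomputable def phiMinus (t : ℝ) : ℝ := (5 - Real.sqrt (25 - 4 * t)) / 2

lemma phi_facts {t : ℝ} (h0 : 0 ≤ t) (h6 : t ≤ 6) :
    t / 5 ≤ phiMinus t ∧ phiMinus t ≤ t / 5 + t ^ 2 / 25 ∧ phiMinus t ≤ 6 := by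
  have hnn : (0:ℝ) ≤ 25 - 4 * t := by linarith
  have hs := Real.sq_sqrt hnn
  have hs0 := Real.sqrt_nonneg (25 - 4 * t)
  have hs1 : 1 ≤ Real.sqrt (25 - 4 * t) := by nlinarith [hs, hs0]
  unfold phiMinus
  refine ⟨?_, ?_, ?_⟩
  · nlinarith [hs, hs0, sq_nonneg t, sq_nonneg (Real.sqrt (25 - 4 * t) - (5 - 2 * t / 5))]
  · nlinarith [hs, hs0, hs1, sq_nonneg (Real.sqrt (25 - 4 * t) + (5 - 2 * t / 5 - 2 * t ^ 2 / 25))]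
  · nlinarith [hs1]

theorem scaled_iterates_converge :
    ∀ t ∈ Set.Icc (0 : ℝ) 6, ∃ L : ℝ,
      Filter.Tendsto (fun k : ℕ => (5 : ℝ) ^ k * (phiMinus^[k] t)) Filter.atTop (nhds L) := by
  intro t ht
  obtain ⟨ht0, ht6⟩ := ht
  set x : ℕ → ℝ := fun k => phiMinus^[k] t with hx
  have hxsucc : ∀ k, x (k + 1) = phiMinus (x k) := fun k =>
    Function.iterate_succ_apply' phiMinus k t
  have hinv : ∀ k, 0 ≤ x k ∧ x k ≤ 6 := by
    intro k; induction k with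
    | zero => exact ⟨ht0, ht6⟩
    | succ k ih =>
      obtain ⟨h0, h6⟩ := ih
      obtain ⟨hA, hB, hC⟩ := phi_facts h0 h6
      rw [hxsucc]
      exact ⟨by linarith, hC⟩
  have hdecay : ∀ k, x k ≤ 6 * (11 / 25 : ℝ) ^ k := by
    intro k; induction k with
    | zero => simpa using (hinv 0).2
    | succ k ih =>
      obtain ⟨h0, h6⟩ := hinv k
      obtain ⟨hA, hB, hC⟩ := phi_facts h0 h6
      rw [hxsucc]
      have hp : (0:ℝ) ≤ (11 / 25 : ℝ) ^ k := by positivity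
      have hps : (11 / 25 : ℝ) ^ (k + 1) = (11 / 25) * (11 / 25) ^ k := by ring
      nlinarith [hB, ih, sq_nonneg (x k)]
  set a : ℕ → ℝ := fun k => (5:ℝ) ^ k * x k with ha
  have hmono : Monotone a := by
    apply monotone_nat_of_le_succ
    intro k
    obtain ⟨h0, h6⟩ := hinv k
    obtain ⟨hA, _, _⟩ := phi_facts h0 h6
    have h5 : (0:ℝ) < (5:ℝ) ^ k := by positivity
    simp only [ha, hxsucc]
    have : (5:ℝ) ^ (k + 1) = 5 * 5 ^ k := by ring
    nlinarith [hA]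
  have hbound : ∀ k, a k ≤ 231 - 225 * (121 / 125 : ℝ) ^ k := by
    intro k; induction k with
    | zero => simp [ha, hx]; linarith
    | succ k ih =>
      obtain ⟨h0, h6⟩ := hinv k
      obtain ⟨hA, hB, hC⟩ := phi_facts h0 h6
      have hd := hdecay k
      have hsq : x k ^ 2 ≤ 36 * (121 / 625 : ℝ) ^ k := by
        have h1 : x k ^ 2 ≤ (6 * (11 / 25 : ℝ) ^ k) ^ 2 := by nlinarith
        have h2 : (6 * (11 / 25 : ℝ) ^ k) ^ 2 = 36 * (121 / 625 : ℝ) ^ k := by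
          rw [mul_pow, ← pow_mul, mul_comm k 2, pow_mul]; norm_num
        rw [h2] at h1; exact h1
      have hmul : (5:ℝ) ^ k * (121 / 625 : ℝ) ^ k = (121 / 125 : ℝ) ^ k := by
        rw [← mul_pow]; norm_num
      have h5 : (0:ℝ) < (5:ℝ) ^ k := by positivity
      have hstep : a (k + 1) ≤ a k + (36 / 5) * (121 / 125 : ℝ) ^ k := by
        simp only [ha, hxsucc]
        have h51 : (5:ℝ) ^ (k + 1) = 5 * 5 ^ k := by ring
        nlinarith [hB, hsq, hmul, h5]
      have hps : (121 / 125 : ℝ) ^ (k + 1) = (121 / 125) * (121 / 125) ^ k := by ring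
      linarith
  have hbdd : BddAbove (Set.range a) := by
    refine ⟨231, ?_⟩
    rintro y ⟨k, rfl⟩
    have := hbound k
    have hp : (0:ℝ) ≤ (121 / 125 : ℝ) ^ k := by positivity
    linarith
  exact ⟨⨆ k, a k, tendsto_atTop_ciSup hmono hbdd⟩
end

section
/- Let φ₋(t) = (5 - √(25 - 4t))/2 and define ψ(t) = (3/2) · lim_{k→∞} 5^k φ₋^{(k)}(t) for t ∈ [0, 6]. Then ψ is strictly monotone increasing on [0, 6]. -/
lemma phiMinus_mem (t : ℝ) (ht : t ∈ Set.Icc (0 : ℝ) 6) :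
    phiMinus t ∈ Set.Icc (0 : ℝ) 6 := by
  obtain ⟨h0, h6⟩ := ht
  have h1 : (1 : ℝ) ≤ Real.sqrt (25 - 4 * t) := by
    rw [show (1:ℝ) = Real.sqrt 1 by simp]
    exact Real.sqrt_le_sqrt (by linarith)
  have h5 : Real.sqrt (25 - 4 * t) ≤ 5 := by
    rw [show (5:ℝ) = Real.sqrt 25 by rw [show (25:ℝ) = 5^2 by norm_num]; exact (Real.sqrt_sq (by norm_num)).symm]
    exact Real.sqrt_le_sqrt (by linarith)
  constructor <;> (unfold phiMinus; linarith)

lemma phiMinus_gap {s t : ℝ} (hs : s ∈ Set.Icc (0 : ℝ) 6) (ht : t ∈ Set.Icc (0 : ℝ) 6)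
    (hst : s ≤ t) : (t - s) / 5 ≤ phiMinus t - phiMinus s := by
  obtain ⟨hs0, hs6⟩ := hs
  obtain ⟨ht0, ht6⟩ := ht
  set a := Real.sqrt (25 - 4 * s) with ha
  set b := Real.sqrt (25 - 4 * t) with hb
  have ha2 : a ^ 2 = 25 - 4 * s := Real.sq_sqrt (by linarith)
  have hb2 : b ^ 2 = 25 - 4 * t := Real.sq_sqrt (by linarith)
  have hb1 : (1 : ℝ) ≤ b := by
    rw [hb, show (1:ℝ) = Real.sqrt 1 by simp]
    exact Real.sqrt_le_sqrt (by linarith)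
  have ha5 : a ≤ 5 := by
    rw [ha, show (5:ℝ) = Real.sqrt 25 by rw [show (25:ℝ) = 5^2 by norm_num]; exact (Real.sqrt_sq (by norm_num)).symm]
    exact Real.sqrt_le_sqrt (by linarith)
  have hb5 : b ≤ 5 := by
    rw [hb, show (5:ℝ) = Real.sqrt 25 by rw [show (25:ℝ) = 5^2 by norm_num]; exact (Real.sqrt_sq (by norm_num)).symm]
    exact Real.sqrt_le_sqrt (by linarith)
  have ha0 : 0 ≤ a := Real.sqrt_nonneg _
  have hab : a - b ≥ 4 * (t - s) / 10 := by
    have hsum : a + b ≤ 10 := by linarith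
    have hsumpos : 0 < a + b := by linarith
    have key : (a - b) * (a + b) = 4 * (t - s) := by ring_nf; nlinarith [ha2, hb2]
    rw [ge_iff_le, div_le_iff₀ (by norm_num)]
    calc 4 * (t - s) = (a - b) * (a + b) := key.symm
    _ ≤ (a - b) * 10 := by
        have hanb : 0 ≤ a - b := by
          nlinarith [Real.sqrt_nonneg (25 - 4*s), Real.sqrt_nonneg (25 - 4*t)]
        nlinarith
  unfold phiMinus
  rw [← ha, ← hb]
  linarith

lemma iter_mem (k : ℕ) (t : ℝ) (ht : t ∈ Set.Icc (0 : ℝ) 6) :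
    phiMinus^[k] t ∈ Set.Icc (0 : ℝ) 6 := by
  induction k with
  | zero => simpa using ht
  | succ n ih => rw [Function.iterate_succ_apply']; exact phiMinus_mem _ ih

lemma iter_gap (k : ℕ) {s t : ℝ} (hs : s ∈ Set.Icc (0 : ℝ) 6) (ht : t ∈ Set.Icc (0 : ℝ) 6)
    (hst : s ≤ t) :
    (t - s) ≤ (5 : ℝ) ^ k * (phiMinus^[k] t - phiMinus^[k] s) ∧
      phiMinus^[k] s ≤ phiMinus^[k] t := by
  induction k with
  | zero => simpa using hst
  | succ n ih =>
    obtain ⟨ih1, ih2⟩ := ih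
    have hgap := phiMinus_gap (iter_mem n s hs) (iter_mem n t ht) ih2
    have h5 : (0 : ℝ) < 5 ^ n := by positivity
    constructor
    · rw [Function.iterate_succ_apply', Function.iterate_succ_apply', pow_succ]
      calc (t - s) ≤ 5 ^ n * (phiMinus^[n] t - phiMinus^[n] s) := ih1
      _ ≤ 5 ^ n * (5 * (phiMinus (phiMinus^[n] t) - phiMinus (phiMinus^[n] s))) := by
          have := hgap
          have : phiMinus^[n] t - phiMinus^[n] s ≤ 5 * (phiMinus (phiMinus^[n] t) - phiMinus (phiMinus^[n] s)) := by linarith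
          nlinarith
      _ = 5 ^ n * 5 * (phiMinus (phiMinus^[n] t) - phiMinus (phiMinus^[n] s)) := by ring
    · rw [Function.iterate_succ_apply', Function.iterate_succ_apply']
      have := ih2
      linarith [hgap, div_nonneg (sub_nonneg.mpr ih2) (by norm_num : (0:ℝ) ≤ 5)]

theorem psi_strictMonoOn (ψ : ℝ → ℝ)
    (hψ : ∀ t ∈ Set.Icc (0 : ℝ) 6,
      Filter.Tendsto (fun k : ℕ => (5 : ℝ) ^ k * (phiMinus^[k] t)) Filter.atTop
        (nhds (2 / 3 * ψ t))) :
    StrictMonoOn ψ (Set.Icc (0 : ℝ) 6) := by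
  intro s hs t ht hst
  have hdiff : Filter.Tendsto
      (fun k : ℕ => (5 : ℝ) ^ k * (phiMinus^[k] t) - (5 : ℝ) ^ k * (phiMinus^[k] s))
      Filter.atTop (nhds (2 / 3 * ψ t - 2 / 3 * ψ s)) :=
    (hψ t ht).sub (hψ s hs)
  have hle : t - s ≤ 2 / 3 * ψ t - 2 / 3 * ψ s := by
    refine le_of_tendsto_of_tendsto' tendsto_const_nhds hdiff ?_
    intro k
    have := (iter_gap k hs ht hst.le).1
    linarith [this, mul_sub ((5:ℝ)^k) (phiMinus^[k] t) (phiMinus^[k] s)]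
  linarith
end

section
/- Let φ₋, φ₊ : [0,5] → [0,5] be the two inverse branches of q(z) = z(5 - z), i.e. φ±(t) = (5 ± √(25 - 4t))/2. The attractor (Julia set) J = ⋂_{m≥0} ⋃_{δ ∈ {+,-}^m} φ_δ([0,5]), where φ_δ denotes the composition φ_{δ₁} ∘ ⋯ ∘ φ_{δ_m}, has Lebesgue measure zero. -/
noncomputable def phiPlus (t : ℝ) : ℝ := (5 + Real.sqrt (25 - 4 * t)) / 2

noncomputable def phiBranch (b : Bool) : ℝ → ℝ := if b then phiPlus else phiMinus

noncomputable def phiWord : List Bool → ℝ → ℝ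
  | [] => id
  | b :: rest => phiBranch b ∘ phiWord rest

open MeasureTheory Set
open scoped ENNReal NNReal

noncomputable def juliaK : NNReal := ⟨(Real.sqrt 5)⁻¹, by positivity⟩

lemma sqrt5_pos : (0:ℝ) < Real.sqrt 5 := Real.sqrt_pos.2 (by norm_num)

lemma sqrt5_sq : (Real.sqrt 5) ^ 2 = 5 := Real.sq_sqrt (by norm_num)

lemma sqrt25 : Real.sqrt 25 = 5 := by
  rw [show (25:ℝ) = 5 ^ 2 by norm_num, Real.sqrt_sq (by norm_num)]

lemma phiBranch_false : phiBranch false = phiMinus := by simp [phiBranch]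
lemma phiBranch_true : phiBranch true = phiPlus := by simp [phiBranch]

lemma branch_maps (b : Bool) : MapsTo (phiBranch b) (Icc 0 5) (Icc (0:ℝ) 5) := by
  intro t ht
  have h1 : Real.sqrt (25 - 4 * t) ≤ 5 := by
    have := Real.sqrt_le_sqrt (show (25 - 4*t : ℝ) ≤ 25 by linarith [ht.1])
    rwa [sqrt25] at this
  have h0 : 0 ≤ Real.sqrt (25 - 4 * t) := Real.sqrt_nonneg _
  have hm : phiMinus t ∈ Icc (0:ℝ) 5 := by
    rw [mem_Icc]; unfold phiMinus; constructor <;> linarith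
  have hp : phiPlus t ∈ Icc (0:ℝ) 5 := by
    rw [mem_Icc]; unfold phiPlus; constructor <;> linarith
  cases b
  · rwa [phiBranch_false]
  · rwa [phiBranch_true]

lemma branch_lip (b : Bool) : LipschitzOnWith juliaK (phiBranch b) (Icc 0 5) := by
  apply LipschitzOnWith.of_dist_le_mul
  intro x hx y hy
  have hax : (5:ℝ) ≤ 25 - 4 * x := by linarith [hx.2]
  have hay : (5:ℝ) ≤ 25 - 4 * y := by linarith [hy.2]
  set s := Real.sqrt (25 - 4 * x) with hs
  set u := Real.sqrt (25 - 4 * y) with hu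
  have hs2 : s ^ 2 = 25 - 4 * x := Real.sq_sqrt (by linarith)
  have hu2 : u ^ 2 = 25 - 4 * y := Real.sq_sqrt (by linarith)
  have hsge : Real.sqrt 5 ≤ s := Real.sqrt_le_sqrt hax
  have huge : Real.sqrt 5 ≤ u := Real.sqrt_le_sqrt hay
  have h5 := sqrt5_pos
  have h5s := sqrt5_sq
  have hK : (juliaK : ℝ) = (Real.sqrt 5)⁻¹ := rfl
  rw [Real.dist_eq, Real.dist_eq, hK]
  have key : |s - u| * Real.sqrt 5 ≤ 2 * |x - y| := by
    have hprod : (s - u) * (s + u) = 4 * (y - x) := by nlinarith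
    rcases abs_cases (s - u) with ⟨h1, h2⟩ | ⟨h1, h2⟩ <;>
      rcases abs_cases (x - y) with ⟨h3, h4⟩ | ⟨h3, h4⟩ <;>
      rw [h1, h3] <;> nlinarith
  have hgoal : |phiBranch b x - phiBranch b y| = |s - u| / 2 := by
    cases b
    · rw [phiBranch_false]
      unfold phiMinus
      rw [show (5 - s)/2 - (5 - u)/2 = -((s - u)/2) from by ring, abs_neg, abs_div]
      norm_num
    · rw [phiBranch_true]
      unfold phiPlus
      rw [show (5 + s)/2 - (5 + u)/2 = (s - u)/2 from by ring, abs_div]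
      norm_num
  rw [hgoal, inv_mul_eq_div, div_le_div_iff₀ (by norm_num : (0:ℝ) < 2) h5]
  linarith [key]

lemma lipOn_ediam {K : NNReal} {f : ℝ → ℝ} {s : Set ℝ} (hf : LipschitzOnWith K f s) :
    EMetric.diam (f '' s) ≤ (K : ℝ≥0∞) * EMetric.diam s := by
  apply EMetric.diam_le
  rintro _ ⟨x, hx, rfl⟩ _ ⟨y, hy, rfl⟩
  exact (hf hx hy).trans (mul_le_mul_right (EMetric.edist_le_diam_of_mem hx hy) _)

lemma word_maps (l : List Bool) : MapsTo (phiWord l) (Icc 0 5) (Icc (0:ℝ) 5) := by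
  induction l with
  | nil => exact mapsTo_id _
  | cons b rest ih => exact (branch_maps b).comp ih

lemma word_lip (l : List Bool) :
    LipschitzOnWith (juliaK ^ l.length) (phiWord l) (Icc 0 5) := by
  induction l with
  | nil => simpa [phiWord] using LipschitzWith.id.lipschitzOnWith (s := Icc (0:ℝ) 5)
  | cons b rest ih =>
    have := (branch_lip b).comp ih (word_maps rest)
    simpa [phiWord, pow_succ, mul_comm] using this

theorem julia_set_measure_zero :
    MeasureTheory.volume
      (⋂ m : ℕ, ⋃ δ : Fin m → Bool, phiWord (List.ofFn δ) '' Set.Icc (0 : ℝ) 5) = 0 := by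
  set J := ⋂ m : ℕ, ⋃ δ : Fin m → Bool, phiWord (List.ofFn δ) '' Set.Icc (0 : ℝ) 5 with hJ
  have key : ∀ m : ℕ, volume J ≤ (2 * (juliaK : ℝ≥0∞)) ^ m * ENNReal.ofReal 5 := by
    intro m
    have h1 : volume J ≤ volume (⋃ δ : Fin m → Bool, phiWord (List.ofFn δ) '' Set.Icc (0:ℝ) 5) :=
      measure_mono (Set.iInter_subset _ m)
    have h2 : ∀ δ : Fin m → Bool,
        volume (phiWord (List.ofFn δ) '' Set.Icc (0:ℝ) 5) ≤ (juliaK : ℝ≥0∞) ^ m * ENNReal.ofReal 5 := by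
      intro δ
      calc volume (phiWord (List.ofFn δ) '' Set.Icc (0:ℝ) 5)
          ≤ EMetric.diam (phiWord (List.ofFn δ) '' Set.Icc (0:ℝ) 5) := Real.volume_le_diam _
        _ ≤ (juliaK ^ (List.ofFn δ).length : NNReal) * EMetric.diam (Set.Icc (0:ℝ) 5) :=
            lipOn_ediam (word_lip _)
        _ = (juliaK : ℝ≥0∞) ^ m * ENNReal.ofReal 5 := by
            rw [List.length_ofFn, show EMetric.diam (Set.Icc (0:ℝ) 5) = Metric.ediam (Set.Icc (0:ℝ) 5) from rfl, Real.ediam_Icc]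
            push_cast
            norm_num
    calc volume J ≤ volume (⋃ δ : Fin m → Bool, phiWord (List.ofFn δ) '' Set.Icc (0:ℝ) 5) := h1
      _ ≤ ∑ δ : Fin m → Bool, volume (phiWord (List.ofFn δ) '' Set.Icc (0:ℝ) 5) :=
          measure_iUnion_fintype_le _ _
      _ ≤ ∑ _δ : Fin m → Bool, (juliaK : ℝ≥0∞) ^ m * ENNReal.ofReal 5 :=
          Finset.sum_le_sum (fun δ _ => h2 δ)
      _ = (2:ℝ≥0∞) ^ m * ((juliaK : ℝ≥0∞) ^ m * ENNReal.ofReal 5) := by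
          rw [Finset.sum_const, Finset.card_univ]
          simp [Fintype.card_fun, nsmul_eq_mul]
      _ = (2 * (juliaK : ℝ≥0∞)) ^ m * ENNReal.ofReal 5 := by rw [mul_pow]; ring
  have hlt : (2 * (juliaK : ℝ≥0∞)) < 1 := by
    have h2' : (2:ℝ) < Real.sqrt 5 := by
      have h2 : Real.sqrt 4 < Real.sqrt 5 := by
        apply Real.sqrt_lt_sqrt <;> norm_num
      have h4 : Real.sqrt 4 = 2 := by
        rw [show (4:ℝ) = 2 ^ 2 by norm_num, Real.sqrt_sq (by norm_num)]
      linarith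
    have hinv : (Real.sqrt 5)⁻¹ * Real.sqrt 5 = 1 := inv_mul_cancel₀ sqrt5_pos.ne'
    have hr : (2:ℝ) * (Real.sqrt 5)⁻¹ < 1 := by
      nlinarith [mul_pos (sub_pos.2 h2') (inv_pos.2 sqrt5_pos)]
    have : ((2 * juliaK : NNReal) : ℝ≥0∞) < ((1 : NNReal) : ℝ≥0∞) := by
      rw [ENNReal.coe_lt_coe, ← NNReal.coe_lt_coe]
      push_cast
      exact hr
    simpa using this
  have htend : Filter.Tendsto (fun m => (2 * (juliaK : ℝ≥0∞)) ^ m * ENNReal.ofReal 5)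
      Filter.atTop (nhds 0) := by
    have := ENNReal.Tendsto.mul_const
      (ENNReal.tendsto_pow_atTop_nhds_zero_of_lt_one hlt)
      (Or.inr (by norm_num : ENNReal.ofReal 5 ≠ ⊤))
    simpa using this
  have : volume J ≤ 0 := ge_of_tendsto' htend key
  exact le_antisymm this zero_le
end
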